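/- Let R be a ring, let 0 → X →^f M' →^g Y → 0 be a non-split short exact sequence of R-modules with X indecomposable and End(X) local, and suppose t ∈ End(M') satisfies g∘t = g. Then t is an automorphism of M'. (Hence g is right minimal.) -/
import Mathlib


/-- Let `0 → X →f M' →g Y → 0` be a non-split short exact sequence of
`R`-modules with `X` indecomposable and `End(X)` local.  If `t ∈ End(M')` satisfies
`g ∘ t = g`, then `t` is an automorphism of `M'` (hence `g` is right minimal). -/
theorem right_minimal_of_nonsplit
    (R : Type) [Ring R]
    (X M' Y : Type) [AddCommGroup X] [Module R X] [AddCommGroup M'] [Module R M']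
    [AddCommGroup Y] [Module R Y]
    (f : X →ₗ[R] M') (g : M' →ₗ[R] Y)
    (hf : Function.Injective f) (hg : Function.Surjective g)
    (hexact : LinearMap.range f = LinearMap.ker g)
    (hnonsplit : ¬ ∃ s : Y →ₗ[R] M', g.comp s = LinearMap.id)
    [IsLocalRing (Module.End R X)]
    (t : M' →ₗ[R] M') (ht : g.comp t = g) :
    Function.Bijective t := by
  have hgt : ∀ m, g (t m) = g m := fun m => LinearMap.congr_fun ht m
  have hgf : ∀ x, g (f x) = 0 := by
    intro x
    have : f x ∈ LinearMap.ker g := hexact ▸ LinearMap.mem_range_self f x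
    exact this
  -- (id - t) lands in range f
  have hmem : ∀ m, m - t m ∈ LinearMap.range f := by
    intro m
    rw [hexact, LinearMap.mem_ker, map_sub, hgt, sub_self]
  set e := LinearEquiv.ofInjective f hf with he
  set h : M' →ₗ[R] X :=
    (e.symm.toLinearMap).comp ((LinearMap.id - t).codRestrict (LinearMap.range f) hmem)
    with hh
  have hfh : ∀ m, f (h m) = m - t m := by
    intro m
    have : (e (e.symm ⟨m - t m, hmem m⟩) : M') = (⟨m - t m, hmem m⟩ : LinearMap.range f) := by
      rw [e.apply_symm_apply]
    simpa [hh, he, LinearEquiv.ofInjective_apply] using this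
  have htm : ∀ m, t m = m - f (h m) := by
    intro m; rw [hfh]; abel
  have hsum : (h.comp f) + (1 - h.comp f) = 1 := by abel
  rcases IsLocalRing.isUnit_or_isUnit_of_add_one hsum with hu | hu
  · -- h ∘ f is a unit : the sequence splits, contradiction
    exfalso
    set v : Module.End R X := ↑hu.unit⁻¹ with hv
    have h0 : (↑hu.unit⁻¹ * (h.comp f) : Module.End R X) = 1 := by
      exact hu.val_inv_mul
    have hvhf : ∀ x, v (h (f x)) = x := by
      intro x
      have := LinearMap.congr_fun h0 x
      simpa only [Module.End.mul_apply, Module.End.one_apply, LinearMap.comp_apply] using this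
    set r : M' →ₗ[R] X := v.comp h with hr
    have hrf : ∀ x, r (f x) = x := fun x => hvhf x
    -- well-definedness of the section
    have hq : ∀ a b : M', g a = g b → a - f (r a) = b - f (r b) := by
      intro a b hab
      have : a - b ∈ LinearMap.range f := by
        rw [hexact, LinearMap.mem_ker, map_sub, hab, sub_self]
      obtain ⟨x, hx⟩ := this
      have h1 : a = b + f x := by rw [hx]; abel
      rw [h1]
      simp only [map_add, hrf]
      abel
    set sfun : Y → M' := fun y => (hg y).choose - f (r (hg y).choose) with hsfun
    have hgchoose : ∀ y, g (hg y).choose = y := fun y => (hg y).choose_spec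
    have hs : ∀ (m : M'), sfun (g m) = m - f (r m) := by
      intro m
      exact hq _ m (hgchoose (g m))
    set s : Y →ₗ[R] M' :=
      { toFun := sfun
        map_add' := by
          intro y1 y2
          obtain ⟨m1, hm1⟩ := hg y1
          obtain ⟨m2, hm2⟩ := hg y2
          have : y1 + y2 = g (m1 + m2) := by rw [map_add, hm1, hm2]
          show sfun (y1 + y2) = sfun y1 + sfun y2
          rw [this, hs, ← hm1, ← hm2, hs, hs]
          simp only [map_add]
          abel
        map_smul' := by
          intro c y
          obtain ⟨m, hm⟩ := hg y
          have : c • y = g (c • m) := by rw [map_smul, hm]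
          show sfun (c • y) = c • sfun y
          rw [this, hs, ← hm, hs]
          simp only [map_smul, RingHom.id_apply]
          rw [smul_sub] } with hsdef
    apply hnonsplit
    refine ⟨s, ?_⟩
    ext y
    obtain ⟨m, hm⟩ := hg y
    simp only [LinearMap.comp_apply, LinearMap.id_apply, hsdef, LinearMap.coe_mk,
      AddHom.coe_mk]
    rw [← hm, hs, map_sub, hgf, sub_zero]
  · -- 1 - h ∘ f is a unit : t is invertible
    set v : Module.End R X := ↑hu.unit⁻¹ with hv
    have hA : ((1 - h.comp f) * ↑hu.unit⁻¹ : Module.End R X) = 1 := by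
      exact hu.mul_val_inv
    have hB : ((↑hu.unit⁻¹ : Module.End R X) * (1 - h.comp f)) = 1 := by
      exact hu.val_inv_mul
    have h1 : ∀ x, v x - h (f (v x)) = x := by
      intro x
      have := LinearMap.congr_fun hA x
      simpa only [Module.End.mul_apply, Module.End.one_apply, LinearMap.sub_apply,
        LinearMap.comp_apply] using this
    have h2 : ∀ x, v x - v (h (f x)) = x := by
      intro x
      have := LinearMap.congr_fun hB x
      simpa only [Module.End.mul_apply, Module.End.one_apply, LinearMap.sub_apply,
        LinearMap.comp_apply, map_sub] using this
    rw [Function.bijective_iff_has_inverse]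
    refine ⟨fun m => m + f (v (h m)), ?_, ?_⟩
    · intro m
      show t m + f (v (h (t m))) = m
      have k : h (t m) = h m - h (f (h m)) := by rw [htm m, map_sub]
      rw [k, map_sub, h2 (h m), htm m]
      abel
    · intro m
      show t (m + f (v (h m))) = m
      have k2 : h (f (v (h m))) = v (h m) - h m :=
        eq_sub_of_add_eq ((sub_eq_iff_eq_add'.mp (h1 (h m))).symm)
      rw [htm (m + f (v (h m))), map_add, k2, map_add, map_sub]
      abel
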